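/- The Conway graph invariant satisfies the 4-term relation: for any graph G and any ordered pair of adjacent vertices A, B, one has ν(G) − ν(G'_{AB}) − ν(G̃_{AB}) + ν(G̃'_{AB}) = 0, where ν denotes the Conway graph invariant. -/

import Mathlib

/-!
Over `ℤ/2ℤ`, switching `G ↦ G̃_{AB}` acts on the adjacency matrix `M` as the congruence
`M ↦ E M Eᵀ` with the elementary matrix `E = 1 + e_{AB}`: row `B` is added to row `A` and column `B`
to column `A`, and the new diagonal entry `2 M_{AB}` vanishes mod 2. Hence switching preserves
`det M` and so `ν`. Since switching commutes with deleting the edge `AB`, the four terms cancel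
in pairs.
-/

open Classical in
noncomputable def adjM {V : Type} [Fintype V] [DecidableEq V] (G : SimpleGraph V) :
    Matrix V V (ZMod 2) :=
  fun i j => if G.Adj i j then 1 else 0

/- The Conway graph invariant: `(-y)^(n/2)` if the adjacency matrix over `ℤ/2ℤ` is
nondegenerate (which forces the number `n` of vertices to be even), and `0` otherwise. -/
open Classical in
noncomputable def conway {V : Type} [Fintype V] [DecidableEq V] (G : SimpleGraph V) :
    Polynomial ℂ :=
  if (adjM G).det ≠ 0 then (-(Polynomial.X : Polynomial ℂ)) ^ (Fintype.card V / 2) else 0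

/- `tilde G A B` switches the adjacency to `A` of every vertex `v ∉ {A,B}` adjacent to `B`. -/
def tilde {V : Type} (G : SimpleGraph V) (A B : V) : SimpleGraph V where
  Adj x y := Xor' (G.Adj x y)
    ((x = A ∧ y ≠ A ∧ y ≠ B ∧ G.Adj y B) ∨ (y = A ∧ x ≠ A ∧ x ≠ B ∧ G.Adj x B))
  symm := by
    constructor
    intro x y h
    have hxy : G.Adj x y ↔ G.Adj y x := ⟨fun h => h.symm, fun h => h.symm⟩
    unfold Xor' Xor at h ⊢
    tauto
  loopless := by
    constructor
    intro x h
    have : ¬ G.Adj x x := G.loopless.irrefl x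
    unfold Xor' Xor at h
    tauto

open Matrix

section

variable {V : Type}

theorem tilde_adj (G : SimpleGraph V) (A B x y : V) :
    (tilde G A B).Adj x y ↔ Xor (G.Adj x y)
      ((x = A ∧ y ≠ A ∧ y ≠ B ∧ G.Adj y B) ∨ (y = A ∧ x ≠ A ∧ x ≠ B ∧ G.Adj x B)) :=
  Iff.rfl

theorem tilde_adj_of_ne (G : SimpleGraph V) {A B x y : V} (hx : x ≠ A) (hy : y ≠ A) :
    (tilde G A B).Adj x y ↔ G.Adj x y := by
  simp [tilde_adj, hx, hy, xor_def]

theorem tilde_adj_left (G : SimpleGraph V) {A B x : V} (hx : x ≠ A) :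
    (tilde G A B).Adj A x ↔ Xor (G.Adj A x) (G.Adj B x) := by
  rcases eq_or_ne x B with rfl | hxB
  · simp [tilde_adj]
  · simp [tilde_adj, hx, hxB, G.adj_comm x B]

theorem tilde_deleteEdges (G : SimpleGraph V) (A B : V) :
    (tilde G A B).deleteEdges {s(A, B)} = tilde (G.deleteEdges {s(A, B)}) A B := by
  -- switching reads only adjacencies `y ~ B` with `y ≠ A`, which deleting `AB` does not touch
  ext x y
  simp only [SimpleGraph.deleteEdges_adj, tilde_adj, Set.mem_singleton_iff, Sym2.eq_iff, xor_def]
  grind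

variable [Fintype V] [DecidableEq V]

theorem adjM_apply_congr {G H : SimpleGraph V} {i j k l : V} (h : H.Adj i j ↔ G.Adj k l) :
    adjM H i j = adjM G k l := by
  classical
  unfold adjM
  exact if_congr h rfl rfl

theorem adjM_comm (G : SimpleGraph V) (i j : V) : adjM G i j = adjM G j i :=
  adjM_apply_congr (G.adj_comm i j)

theorem adjM_self (G : SimpleGraph V) (i : V) : adjM G i i = 0 := by
  simp [adjM]

theorem adjM_apply_eq_add {G H : SimpleGraph V} {i j k l : V}
    (h : H.Adj i j ↔ Xor (G.Adj i j) (G.Adj k l)) : adjM H i j = adjM G i j + adjM G k l := by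
  unfold adjM
  by_cases hij : G.Adj i j <;> by_cases hkl : G.Adj k l <;> simp_all [xor_def]
  decide

theorem adjM_tilde (G : SimpleGraph V) {A B : V} (hAB : A ≠ B) :
    adjM (tilde G A B) = transvection A B 1 * adjM G * transvection B A 1 := by
  have row_A {x : V} (hx : x ≠ A) : adjM (tilde G A B) A x = adjM G A x + adjM G B x :=
    adjM_apply_eq_add (tilde_adj_left G hx)
  ext i j
  rcases eq_or_ne j A with rfl | hj
  · rw [mul_transvection_apply_same]
    rcases eq_or_ne i j with rfl | hi
    · rw [transvection_mul_apply_same, transvection_mul_apply_same, adjM_comm G B i]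
      simp only [adjM_self, one_mul, zero_add, add_zero, CharTwo.add_self_eq_zero]
    · rw [transvection_mul_apply_of_ne _ _ _ _ hi, transvection_mul_apply_of_ne _ _ _ _ hi,
        adjM_comm, row_A hi, adjM_comm G, adjM_comm G i B, one_mul]
  · rw [mul_transvection_apply_of_ne _ _ _ _ hj]
    rcases eq_or_ne i A with rfl | hi
    · rw [transvection_mul_apply_same, row_A hj, one_mul]
    · rw [transvection_mul_apply_of_ne _ _ _ _ hi]
      exact adjM_apply_congr (tilde_adj_of_ne G hi hj)

theorem conway_tilde (G : SimpleGraph V) {A B : V} (hAB : A ≠ B) :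
    conway (tilde G A B) = conway G := by
  rw [conway, conway, adjM_tilde G hAB, det_mul, det_mul, det_transvection_of_ne _ _ hAB,
    det_transvection_of_ne _ _ hAB.symm, one_mul, mul_one]

end

/-- The Conway graph invariant satisfies the 4-term relation:
for any graph `G` and any ordered pair of adjacent vertices `A, B`,
`ν(G) − ν(G'_{AB}) − ν(G̃_{AB}) + ν(G̃'_{AB}) = 0`. -/
theorem conway_four_term {V : Type} [Fintype V] [DecidableEq V]
    (G : SimpleGraph V) (A B : V) (hAB : G.Adj A B) :
    conway G - conway (G.deleteEdges {s(A, B)}) - conway (tilde G A B)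
      + conway ((tilde G A B).deleteEdges {s(A, B)}) = 0 := by
  have hne : A ≠ B := G.ne_of_adj hAB
  rw [tilde_deleteEdges, conway_tilde _ hne, conway_tilde _ hne]
  ring
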